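/- Let 𝓡 = 𝓡(ℝ,𝔽) with 𝔽 an algebraically closed field, and let A ∈ 𝓡̄^{n×n} be a singular ELT matrix. Then there exists a singular ELT matrix B with all entries in 𝓡^× ∪ {−∞} such that A ⊨ B entrywise. -/

import Mathlib

/-- The ELT algebra `𝓡(F, L)` together with an adjoined `−∞` element:
`bot` represents `−∞`, and `elt a ℓ` represents the element `[ℓ]a`
with tangible value `a ∈ F` and layer `ℓ ∈ L`.  Thus `ELT F L` plays the
role of `𝓡̄ = 𝓡 ∪ {−∞}`. -/
inductive ELT (F : Type) (L : Type) : Type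
  | bot : ELT F L
  | elt : F → L → ELT F L

namespace ELT

variable {F : Type} {L : Type}

/-- The sorting map `s : 𝓡̄ → L`, with `s (−∞) = 0`. -/
def s [Zero L] : ELT F L → L
  | bot => 0
  | elt _ ℓ => ℓ

/-- The tangible value `t : 𝓡̄ → F ∪ {−∞}`, with `t (−∞) = −∞ = ⊥`. -/
def t : ELT F L → WithBot F
  | bot => ⊥
  | elt a _ => (a : WithBot F)

/-- `−∞` is the additive identity of `𝓡̄`, so we register it as the zero. -/
instance : Zero (ELT F L) := ⟨bot⟩

/-- The multiplicative identity `[1]0`. -/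
instance [Zero F] [One L] : One (ELT F L) := ⟨elt 0 1⟩

/-- Addition on `𝓡̄`: the element with larger tangible value wins, and layers
add in case of a tie; `−∞` is neutral. -/
instance [LinearOrder F] [Add L] : Add (ELT F L) where
  add x y :=
    match x, y with
    | bot, y => y
    | x, bot => x
    | elt a ℓ, elt b k => if a < b then elt b k else if b < a then elt a ℓ else elt a (ℓ + k)

/-- Multiplication on `𝓡̄`: tangible values add, layers multiply; `−∞` is absorbing. -/
instance [Add F] [Mul L] : Mul (ELT F L) where
  mul x y :=
    match x, y with
    | bot, _ => bot
    | _, bot => bot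
    | elt a ℓ, elt b k => elt (a + b) (ℓ * k)

/-- The surpassing relation `x ⊨ y` on `𝓡̄`: `x = y + z` for some zero-layered `z`. -/
def Surpass [LinearOrder F] [Add L] [Zero L] (x y : ELT F L) : Prop :=
  ∃ z : ELT F L, s z = 0 ∧ x = y + z

/-- `x ∈ 𝓡^× ∪ {−∞}`: either `x = −∞` or `x` has nonzero layer. -/
def TangibleOrBot [Zero L] (x : ELT F L) : Prop :=
  x = bot ∨ s x ≠ 0

/-- The sum of a finite family of elements of `𝓡̄`. -/
def fsum [LinearOrder F] [Add L] {m : ℕ} (f : Fin m → ELT F L) : ELT F L :=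
  (List.ofFn f).sum

/-- A finite family of vectors in `𝓡̄ⁿ` is linearly dependent if there are
coefficients in `𝓡^× ∪ {−∞}`, not all `−∞`, such that the corresponding linear
combination is zero-layered in every coordinate (equivalently, some subfamily
admits a combination with all coefficients in `𝓡^×` which is zero-layered
everywhere). -/
def LinDep [LinearOrder F] [Zero L] [Add L] [Add F] [Mul L] {m n : ℕ}
    (v : Fin m → Fin n → ELT F L) : Prop :=
  ∃ a : Fin m → ELT F L, (∀ i, TangibleOrBot (a i)) ∧ (∃ i, a i ≠ bot) ∧
    ∀ j : Fin n, s (fsum fun i => a i * v i j) = 0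

/-- The ELT determinant of a square ELT matrix. -/
noncomputable def det {n : ℕ} [LinearOrder F] [Add F] [Zero F] [Ring L]
    (A : Matrix (Fin n) (Fin n) (ELT F L)) : ELT F L :=
  ((Finset.univ : Finset (Equiv.Perm (Fin n))).toList.map fun σ =>
    elt 0 (((Equiv.Perm.sign σ : ℤˣ) : ℤ) : L) * (List.ofFn fun i => A i (σ i)).prod).sum

/-- The EL tropicalization of a Hahn (generalized Puiseux) series: `0 ↦ −∞`,
and a nonzero series with leading monomial `ℓ tᵃ` goes to `[ℓ](−a)`. -/
noncomputable def ELTrop [AddCommGroup F] [LinearOrder F] [IsOrderedAddMonoid F] [Zero L] (x : HahnSeries F L) : ELT F L :=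
  open scoped Classical in
  if x = 0 then bot else elt (-x.order) (x.coeff x.order)

end ELT

/-! Expanding `det A` along the entry `(i, j)` gives `det A = A i j * C + D`, where neither `C`
nor `D` involves `A i j`. If `A i j = [0]a`, it can be replaced by a tangible `x` with
`[0]a ⊨ x` keeping `det` zero-layered: `x = −∞` if `D` is zero-layered; otherwise `D = [m]d`
with `d < a + t(C)`, and then `x = [1]e` with `d - t(C) < e < a` makes `x * C` swamp `D` when
`C = [0]c`, while `x = [-m/γ](d - c)` cancels the layer of `D` when `C = [γ]c` with `γ ≠ 0`.
Surpassing is transitive, so fixing the entries one at a time proves the theorem. -/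

namespace ELT

variable {F L : Type} {n : ℕ}

section Arithmetic

@[simp] lemma s_bot [Zero L] : s (bot : ELT F L) = 0 := rfl
@[simp] lemma s_elt [Zero L] (a : F) (ℓ : L) : s (elt a ℓ) = ℓ := rfl

section Mul

variable [Add F] [Mul L]

@[simp] lemma bot_mul (x : ELT F L) : bot * x = bot := by cases x <;> rfl
@[simp] lemma mul_bot (x : ELT F L) : x * bot = bot := by cases x <;> rfl
@[simp] lemma elt_mul_elt (a b : F) (ℓ k : L) : elt a ℓ * elt b k = elt (a + b) (ℓ * k) := rfl

end Mul

section Add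

variable [LinearOrder F] [Add L]

@[simp] lemma bot_add (x : ELT F L) : bot + x = x := by cases x <;> rfl
@[simp] lemma add_bot (x : ELT F L) : x + bot = x := by cases x <;> rfl

lemma elt_add_of_lt {a b : F} (h : a < b) (ℓ k : L) : elt a ℓ + elt b k = elt b k :=
  if_pos h

lemma elt_add_of_gt {a b : F} (h : b < a) (ℓ k : L) : elt a ℓ + elt b k = elt a ℓ :=
  (if_neg h.not_gt).trans (if_pos h)

@[simp] lemma elt_add_elt_self (a : F) (ℓ k : L) : elt a ℓ + elt a k = elt a (ℓ + k) :=
  (if_neg (lt_irrefl a)).trans (if_neg (lt_irrefl a))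

end Add

protected lemma add_assoc [LinearOrder F] [AddSemigroup L] (x y z : ELT F L) :
    x + y + z = x + (y + z) := by
  rcases x with _ | ⟨a, ℓ⟩ <;> rcases y with _ | ⟨b, m⟩ <;> rcases z with _ | ⟨c, k⟩ <;>
    try simp only [bot_add, add_bot]
  rcases lt_trichotomy a b with hab | hab | hab <;> rcases lt_trichotomy b c with hbc | hbc | hbc <;>
    rcases lt_trichotomy a c with hac | hac | hac <;>
    first
      | (exfalso; order)
      | simp [*, elt_add_of_lt, elt_add_of_gt, _root_.add_assoc]

protected lemma add_comm [LinearOrder F] [AddCommMagma L] (x y : ELT F L) : x + y = y + x := by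
  rcases x with _ | ⟨a, ℓ⟩ <;> rcases y with _ | ⟨b, m⟩ <;> try simp only [bot_add, add_bot]
  rcases lt_trichotomy a b with h | h | h <;>
    simp [*, elt_add_of_lt, elt_add_of_gt, _root_.add_comm]

protected lemma mul_assoc [AddSemigroup F] [Semigroup L] (x y z : ELT F L) :
    x * y * z = x * (y * z) := by
  rcases x with _ | ⟨a, ℓ⟩ <;> rcases y with _ | ⟨b, m⟩ <;> rcases z with _ | ⟨c, k⟩ <;>
    simp [_root_.mul_assoc, _root_.add_assoc]

protected lemma mul_comm [AddCommMagma F] [CommMagma L] (x y : ELT F L) : x * y = y * x := by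
  rcases x with _ | ⟨a, ℓ⟩ <;> rcases y with _ | ⟨b, m⟩ <;> simp [_root_.mul_comm, _root_.add_comm]

protected lemma left_distrib [Add F] [LinearOrder F] [AddLeftStrictMono F] [Distrib L]
    (x y z : ELT F L) : x * (y + z) = x * y + x * z := by
  rcases x with _ | ⟨a, ℓ⟩ <;> rcases y with _ | ⟨b, m⟩ <;> rcases z with _ | ⟨c, k⟩ <;>
    try simp only [bot_add, add_bot, bot_mul, mul_bot, elt_mul_elt]
  rcases lt_trichotomy b c with h | h | h
  · rw [elt_add_of_lt h, elt_add_of_lt (add_lt_add_right h a)]; rfl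
  · simp [h, mul_add]
  · rw [elt_add_of_gt h, elt_add_of_gt (add_lt_add_right h a)]; rfl

variable [AddCommGroup F] [LinearOrder F] [IsOrderedAddMonoid F] [CommSemiring L]

noncomputable instance : CommSemiring (ELT F L) where
  add_assoc := ELT.add_assoc
  add_comm := ELT.add_comm
  zero_add := bot_add
  add_zero := add_bot
  mul_assoc := ELT.mul_assoc
  mul_comm := ELT.mul_comm
  one_mul x := by cases x <;> simp [show (1 : ELT F L) = elt 0 1 from rfl]
  mul_one x := by cases x <;> simp [show (1 : ELT F L) = elt 0 1 from rfl]
  zero_mul := bot_mul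
  mul_zero := mul_bot
  left_distrib := ELT.left_distrib
  right_distrib x y z := by
    rw [ELT.mul_comm (x + y), ELT.left_distrib, ELT.mul_comm z, ELT.mul_comm z]
  nsmul := nsmulRec
  npow := npowRec

end Arithmetic

section Surpass

variable [LinearOrder F]

lemma s_add_eq_zero [AddZeroClass L] {x y : ELT F L} (hx : s x = 0) (hy : s y = 0) :
    s (x + y) = 0 := by
  rcases x with _ | ⟨a, ℓ⟩ <;> rcases y with _ | ⟨b, k⟩ <;>
    simp only [s_bot, s_elt, bot_add, add_bot] at hx hy ⊢
  · exact hy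
  · exact hx
  · rcases lt_trichotomy a b with h | rfl | h
    · rwa [elt_add_of_lt h]
    · simp [hx, hy]
    · rwa [elt_add_of_gt h]

lemma Surpass.refl [Add L] [Zero L] (x : ELT F L) : Surpass x x :=
  ⟨bot, rfl, (add_bot x).symm⟩

lemma Surpass.trans [AddMonoid L] {x y z : ELT F L} (hxy : Surpass x y)
    (hyz : Surpass y z) : Surpass x z := by
  obtain ⟨u, hu, rfl⟩ := hxy
  obtain ⟨v, hv, rfl⟩ := hyz
  exact ⟨v + u, s_add_eq_zero hv hu, ELT.add_assoc z v u⟩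

lemma surpass_elt_zero_of_lt [AddZeroClass L] {a b : F} (h : b < a) (ℓ : L) :
    Surpass (elt a 0) (elt b ℓ) :=
  ⟨elt a 0, rfl, (elt_add_of_lt h ℓ 0).symm⟩

end Surpass

lemma tangibleOrBot_elt [Zero L] {a : F} {ℓ : L} (h : ℓ ≠ 0) : TangibleOrBot (elt a ℓ) :=
  Or.inr h

lemma eq_elt_zero_of_not_tangibleOrBot [Zero L] {x : ELT F L} (h : ¬ TangibleOrBot x) :
    ∃ a : F, x = elt a 0 := by
  rcases x with _ | ⟨a, ℓ⟩
  · exact absurd (Or.inl rfl) h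
  · have hℓ : ℓ = 0 := not_not.mp (not_or.mp h).2
    exact ⟨a, hℓ ▸ rfl⟩

lemma exists_tangibleOrBot_surpassed_of_s_mul_add_eq_zero [AddCommGroup F] [LinearOrder F]
    [IsOrderedAddMonoid F] [DenselyOrdered F] [Field L] {a : F} {c d : ELT F L}
    (h : s (elt a 0 * c + d) = 0) :
    ∃ x : ELT F L, TangibleOrBot x ∧ Surpass (elt a 0) x ∧ s (x * c + d) = 0 := by
  by_cases hd : s d = 0
  · exact ⟨bot, Or.inl rfl, ⟨elt a 0, rfl, (bot_add _).symm⟩, by simpa using hd⟩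
  rcases c with _ | ⟨c, γ⟩
  · simp [hd] at h
  rcases d with _ | ⟨d, m⟩
  · exact absurd rfl hd
  replace hd : m ≠ 0 := hd
  have hdc : d < a + c := by
    rcases lt_trichotomy (a + c) d with hlt | heq | hgt
    · rw [elt_mul_elt, elt_add_of_lt hlt] at h
      exact absurd h hd
    · simp [heq] at h
      exact absurd h hd
    · exact hgt
  by_cases hγ : γ = 0
  · obtain ⟨e, hde, hea⟩ := exists_between (sub_lt_iff_lt_add.mpr hdc)
    refine ⟨elt e 1, tangibleOrBot_elt one_ne_zero, surpass_elt_zero_of_lt hea 1, ?_⟩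
    rw [elt_mul_elt, elt_add_of_gt (sub_lt_iff_lt_add.mp hde)]
    simp [hγ]
  · refine ⟨elt (d - c) (-(m / γ)), tangibleOrBot_elt (by simp [hd, hγ]),
      surpass_elt_zero_of_lt (sub_lt_iff_lt_add.mpr hdc) _, ?_⟩
    rw [elt_mul_elt, sub_add_cancel, elt_add_elt_self]
    simp [hγ]

def updateEntry (A : Matrix (Fin n) (Fin n) (ELT F L)) (i j : Fin n) (x : ELT F L) :
    Matrix (Fin n) (Fin n) (ELT F L) :=
  fun k l => if k = i ∧ l = j then x else A k l

section UpdateEntry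

variable (A : Matrix (Fin n) (Fin n) (ELT F L)) (i j : Fin n) (x : ELT F L)

@[simp] lemma updateEntry_apply_self : updateEntry A i j x i j = x :=
  if_pos ⟨rfl, rfl⟩

lemma updateEntry_apply_of_ne {k l : Fin n} (h : (k, l) ≠ (i, j)) :
    updateEntry A i j x k l = A k l :=
  if_neg fun ⟨hk, hl⟩ => h (Prod.ext hk hl)

@[simp] lemma updateEntry_eq_self : updateEntry A i j (A i j) = A := by
  funext k l
  by_cases h : (k, l) = (i, j)
  · obtain ⟨rfl, rfl⟩ := Prod.ext_iff.mp h
    exact updateEntry_apply_self A k l _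
  · exact updateEntry_apply_of_ne A i j _ h

end UpdateEntry

section Det

variable [AddCommGroup F] [LinearOrder F] [IsOrderedAddMonoid F] [CommRing L]
open Finset

lemma det_eq_sum (A : Matrix (Fin n) (Fin n) (ELT F L)) :
    det A = ∑ σ : Equiv.Perm (Fin n),
      elt 0 (((Equiv.Perm.sign σ : ℤˣ) : ℤ) : L) * ∏ i, A i (σ i) := by
  simp only [det, Finset.sum_map_toList, List.prod_ofFn]

noncomputable def cofactor (A : Matrix (Fin n) (Fin n) (ELT F L)) (i j : Fin n) : ELT F L :=
  ∑ σ : Equiv.Perm (Fin n) with σ i = j,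
    elt 0 (((Equiv.Perm.sign σ : ℤˣ) : ℤ) : L) * ∏ k ∈ univ.erase i, A k (σ k)

noncomputable def detAvoiding (A : Matrix (Fin n) (Fin n) (ELT F L)) (i j : Fin n) : ELT F L :=
  ∑ σ : Equiv.Perm (Fin n) with σ i ≠ j,
    elt 0 (((Equiv.Perm.sign σ : ℤˣ) : ℤ) : L) * ∏ k, A k (σ k)

lemma det_updateEntry (A : Matrix (Fin n) (Fin n) (ELT F L)) (i j : Fin n) (x : ELT F L) :
    det (updateEntry A i j x) = x * cofactor A i j + detAvoiding A i j := by
  rw [det_eq_sum, ← sum_filter_add_sum_filter_not univ (fun σ : Equiv.Perm (Fin n) => σ i = j),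
    cofactor, mul_sum, detAvoiding]
  congr 1
  · refine sum_congr rfl fun σ hσ => ?_
    have hσi : σ i = j := (mem_filter.mp hσ).2
    rw [← mul_prod_erase univ _ (mem_univ i), hσi, updateEntry_apply_self,
      prod_congr rfl fun k hk => updateEntry_apply_of_ne A i j x
        fun h => (mem_erase.mp hk).1 (Prod.ext_iff.mp h).1]
    ring
  · refine sum_congr rfl fun σ hσ => ?_
    rw [prod_congr rfl fun k _ => updateEntry_apply_of_ne A i j x
      fun h => (mem_filter.mp hσ).2 (by obtain ⟨rfl, rfl⟩ := Prod.ext_iff.mp h; rfl)]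

lemma det_eq_mul_cofactor_add (A : Matrix (Fin n) (Fin n) (ELT F L)) (i j : Fin n) :
    det A = A i j * cofactor A i j + detAvoiding A i j := by
  conv_lhs => rw [← updateEntry_eq_self A i j]
  exact det_updateEntry A i j _

end Det

variable [AddCommGroup F] [LinearOrder F] [IsOrderedAddMonoid F] [DenselyOrdered F] [Field L]

lemma exists_updateEntry_singular {A : Matrix (Fin n) (Fin n) (ELT F L)} (hA : s (det A) = 0)
    (i j : Fin n) :
    ∃ x : ELT F L, TangibleOrBot x ∧ Surpass (A i j) x ∧ s (det (updateEntry A i j x)) = 0 := by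
  by_cases hij : TangibleOrBot (A i j)
  · exact ⟨A i j, hij, Surpass.refl _, by rwa [updateEntry_eq_self]⟩
  obtain ⟨a, ha⟩ := eq_elt_zero_of_not_tangibleOrBot hij
  rw [det_eq_mul_cofactor_add A i j, ha] at hA
  simp only [ha, det_updateEntry]
  exact exists_tangibleOrBot_surpassed_of_s_mul_add_eq_zero hA

theorem exists_tangibleOrBot_surpassed_singular_of_subset (S : Finset (Fin n × Fin n)) :
    ∀ A : Matrix (Fin n) (Fin n) (ELT F L), s (det A) = 0 →
      (∀ i j, ¬ TangibleOrBot (A i j) → (i, j) ∈ S) →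
      ∃ B : Matrix (Fin n) (Fin n) (ELT F L),
        (∀ i j, TangibleOrBot (B i j)) ∧ s (det B) = 0 ∧ ∀ i j, Surpass (A i j) (B i j) := by
  induction S using Finset.induction_on with
  | empty =>
    exact fun A hA hS => ⟨A, fun i j => not_not.mp fun h => Finset.notMem_empty _ (hS i j h), hA,
      fun _ _ => Surpass.refl _⟩
  | insert p S _ ih =>
    intro A hA hS
    obtain ⟨x, hx, hAx, hdet⟩ := exists_updateEntry_singular hA p.1 p.2
    have hS' : ∀ i j, ¬ TangibleOrBot (updateEntry A p.1 p.2 x i j) → (i, j) ∈ S := by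
      intro i j h
      by_cases hp : (i, j) = p
      · subst hp
        exact absurd hx (by simpa using h)
      · rw [updateEntry_apply_of_ne A _ _ x hp] at h
        exact (Finset.mem_insert.mp (hS i j h)).resolve_left hp
    obtain ⟨B, hB, hdetB, hAB⟩ := ih _ hdet hS'
    refine ⟨B, hB, hdetB, fun i j => ?_⟩
    by_cases hp : (i, j) = p
    · subst hp
      exact hAx.trans (by simpa using hAB i j)
    · simpa [updateEntry_apply_of_ne A _ _ x hp] using hAB i j

end ELT

theorem stmt4_general {𝔽 : Type} [Field 𝔽] {n : ℕ}
    (A : Matrix (Fin n) (Fin n) (ELT ℝ 𝔽))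
    (hA : ELT.s (ELT.det A) = 0) :
    ∃ B : Matrix (Fin n) (Fin n) (ELT ℝ 𝔽),
      (∀ i j, ELT.TangibleOrBot (B i j)) ∧
      ELT.s (ELT.det B) = 0 ∧
      ∀ i j, ELT.Surpass (A i j) (B i j) :=
  ELT.exists_tangibleOrBot_surpassed_singular_of_subset Finset.univ A hA
    fun _ _ _ => Finset.mem_univ _

/-- Every singular ELT matrix surpasses (entrywise) a singular ELT matrix all of
whose entries lie in `𝓡^× ∪ {−∞}`. -/
theorem stmt4 {𝔽 : Type} [Field 𝔽] [IsAlgClosed 𝔽] {n : ℕ}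
    (A : Matrix (Fin n) (Fin n) (ELT ℝ 𝔽))
    (hA : ELT.s (ELT.det A) = 0) :
    ∃ B : Matrix (Fin n) (Fin n) (ELT ℝ 𝔽),
      (∀ i j, ELT.TangibleOrBot (B i j)) ∧
      ELT.s (ELT.det B) = 0 ∧
      ∀ i j, ELT.Surpass (A i j) (B i j) :=
  stmt4_general A hA
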